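/- arXiv:0706.0604 — 3 statements merged into one kernel-verified Lean document; each statement's English description precedes it below -/
import Mathlib

section
/- Let $r \geq 1$ and let $C$ be a commutative ring graded by the additive monoid $\mathbb{N}^r$, i.e. $C = \bigoplus_{I \in \mathbb{N}^r} C_I$ with $C_I \cdot C_J \subseteq C_{I+J}$, such that $C$ is generated as a ring by the component $C_0$ together with the components $C_{e_1}, \dots, C_{e_r}$, where $e_1, \dots, e_r$ is the standard basis of $\mathbb{N}^r$. Let $M$ be a $C$-module that is finitely generated over $C$ and carries a $\mathbb{Z}^r$-grading $M = \bigoplus_{J \in \mathbb{Z}^r} M_J$ by additive subgroups satisfying $C_I \cdot M_J \subseteq M_{I+J}$ for all $I \in \mathbb{N}^r$, $J \in \mathbb{Z}^r$. Write $E = (1,1,\dots,1) \in \mathbb{Z}^r$. If there exists $n_0$ such that $M_{nE} = 0$ for all integers $n \geq n_0$, then there exists $n_1$ such that $M_J = 0$ for every $J \in \mathbb{Z}^r$ with $J \geq n_1 E$ (componentwise). -/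
/-!
Since `C` is generated by `C_0` and the `C_{e_q}`, a homogeneous element of degree `I` with
`I_q > 0` lies in the ideal generated by `C_{e_q}`, hence in `C_{I - e_q} C_{e_q}`; by induction
on `B`, `C_{A + B} = C_A C_B`. So if `M_{nE} = 0`, `K ≤ nE` and `m ∈ M_K`, every homogeneous `c`
with `deg c + K ≥ nE` factors through degree `nE - K` and kills `m`. Thus `m` lies in the
submodule of elements none of whose multiples has a component in a degree `≥ nE`. These
submodules increase with `n` and exhaust `M`, so, `M` being finitely generated, one of them is
all of `M`.
-/

open DirectSum
open scoped Pointwise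

theorem DirectSum.coe_decompose_add_mem_mul_of_mem_span {ι R : Type*} [DecidableEq ι]
    [AddRightCancelMonoid ι] [Ring R] (𝒜 : ι → AddSubgroup R) [GradedRing 𝒜] {j : ι} {x : R}
    (hx : x ∈ Ideal.span (𝒜 j : Set R)) (i : ι) :
    (decompose 𝒜 x (i + j) : R) ∈ (𝒜 i).toAddSubmonoid * (𝒜 j).toAddSubmonoid := by
  suffices ∀ a : R, (decompose 𝒜 (a * x) (i + j) : R) ∈
      (𝒜 i).toAddSubmonoid * (𝒜 j).toAddSubmonoid by simpa using this 1
  induction hx using Submodule.span_induction with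
  | mem b hb =>
    intro a
    rw [coe_decompose_mul_add_of_right_mem 𝒜 hb]
    exact AddSubmonoid.mul_mem_mul (SetLike.coe_mem _) hb
  | zero => simp
  | add x y _ _ hx hy =>
    intro a
    rw [mul_add, decompose_add, DirectSum.add_apply, AddMemClass.coe_add]
    exact add_mem (hx a) (hy a)
  | smul b x _ hx =>
    intro a
    rw [smul_eq_mul, ← mul_assoc]
    exact hx _

theorem SetLike.toAddSubmonoid_add_le_mul_add {ι R : Type*} [AddMonoid ι] [Ring R]
    (𝒜 : ι → AddSubgroup R) [SetLike.GradedMul 𝒜] {B B' : ι}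
    (hB : ∀ A, (𝒜 (A + B)).toAddSubmonoid ≤ (𝒜 A).toAddSubmonoid * (𝒜 B).toAddSubmonoid)
    (hB' : ∀ A, (𝒜 (A + B')).toAddSubmonoid ≤ (𝒜 A).toAddSubmonoid * (𝒜 B').toAddSubmonoid)
    (A : ι) :
    (𝒜 (A + (B + B'))).toAddSubmonoid ≤ (𝒜 A).toAddSubmonoid * (𝒜 (B + B')).toAddSubmonoid :=
  calc (𝒜 (A + (B + B'))).toAddSubmonoid
      = (𝒜 (A + B + B')).toAddSubmonoid := by rw [add_assoc]
    _ ≤ (𝒜 (A + B)).toAddSubmonoid * (𝒜 B').toAddSubmonoid := hB' _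
    _ ≤ (𝒜 A).toAddSubmonoid * (𝒜 B).toAddSubmonoid * (𝒜 B').toAddSubmonoid :=
      AddSubmonoid.mul_le_mul_left (hB A)
    _ = (𝒜 A).toAddSubmonoid * ((𝒜 B).toAddSubmonoid * (𝒜 B').toAddSubmonoid) := mul_assoc ..
    _ ≤ (𝒜 A).toAddSubmonoid * (𝒜 (B + B')).toAddSubmonoid :=
      AddSubmonoid.mul_le_mul_right <| AddSubmonoid.mul_le.mpr fun _ hb _ hb' =>
        (SetLike.mul_mem_graded hb hb' : _ ∈ 𝒜 (B + B'))

theorem Submodule.exists_eq_top_of_directed_of_iSup_eq_top {R M ι : Type*} [Semiring R]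
    [AddCommMonoid M] [Module R M] [Module.Finite R M] [Nonempty ι] (N : ι → Submodule R M)
    (hN : Directed (· ≤ ·) N) (h : ⨆ i, N i = ⊤) : ∃ i, N i = ⊤ := by
  obtain ⟨_, ⟨i, rfl⟩, hi⟩ := (CompleteLattice.isCompactElement_iff_le_of_directed_sSup_le _ ⊤).mp
    ((Submodule.fg_iff_compact ⊤).mp Module.Finite.fg_top) (Set.range N) (Set.range_nonempty N)
    (directedOn_range.mpr hN) (by rw [sSup_range, h])
  exact ⟨i, top_le_iff.mp hi⟩

section VanishingAbove

variable {σ : Type*} [Fintype σ] (C : Type*) {M : Type*} [Semiring C] [AddCommGroup M] [Module C M]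
  (ℳ : (σ → ℤ) → AddSubgroup M) [Decomposition ℳ]

def vanishingAbove (n : ℤ) : Submodule C M where
  carrier := {x | ∀ c : C, ∀ J : σ → ℤ, (∀ q, n ≤ J q) → (decompose ℳ (c • x) J : M) = 0}
  add_mem' {x y} hx hy c J hJ := by
    rw [smul_add, decompose_add, DirectSum.add_apply, AddMemClass.coe_add, hx c J hJ, hy c J hJ,
      add_zero]
  zero_mem' := by simp
  smul_mem' a x hx c J hJ := by
    rw [smul_smul]
    exact hx _ J hJ

theorem vanishingAbove_mono : Monotone (vanishingAbove C ℳ) :=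
  fun _ _ hnn' _ hx c J hJ => hx c J fun q => hnn'.trans (hJ q)

end VanishingAbove

section StandardGraded

variable {σ C M : Type*} [Fintype σ] [DecidableEq σ] [CommRing C] [AddCommGroup M] [Module C M]
  (𝒞 : (σ → ℕ) → AddSubgroup C) (ℳ : (σ → ℤ) → AddSubgroup M)

def IsStandardGraded : Prop :=
  Subring.closure ((𝒞 0 : Set C) ∪ ⋃ q, (𝒞 (Pi.single q 1) : Set C)) = ⊤

def IsGradedSMul : Prop :=
  ∀ (I : σ → ℕ) (J : σ → ℤ) (c : C) (m : M),
    c ∈ 𝒞 I → m ∈ ℳ J → c • m ∈ ℳ ((fun q => (I q : ℤ)) + J)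

variable {𝒞 ℳ} [GradedRing 𝒞]

theorem IsStandardGraded.coe_decompose_mem_span_single
    (hgen : IsStandardGraded 𝒞)
    {q : σ} (x : C) {I : σ → ℕ} (hI : I q ≠ 0) :
    (decompose 𝒞 x I : C) ∈ Ideal.span (𝒞 (Pi.single q 1) : Set C) := by
  have hx : x ∈ Subring.closure ((𝒞 0 : Set C) ∪ ⋃ q, (𝒞 (Pi.single q 1) : Set C)) :=
    hgen ▸ Subring.mem_top x
  revert I
  induction hx using Subring.closure_induction with
  | mem y hy =>
    intro I hI
    rcases hy with hy | hy
    · rw [decompose_of_mem_ne 𝒞 hy (by rintro rfl; exact hI rfl)]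
      exact zero_mem _
    obtain ⟨p, hy⟩ := Set.mem_iUnion.mp hy
    by_cases hpI : Pi.single p 1 = I
    · subst hpI
      obtain rfl : p = q := by_contra fun hpq => hI (Pi.single_eq_of_ne (Ne.symm hpq) 1)
      rw [decompose_of_mem_same 𝒞 hy]
      exact Ideal.subset_span hy
    · rw [decompose_of_mem_ne 𝒞 hy hpI]
      exact zero_mem _
  | zero => simp
  | one =>
    intro I hI
    rw [decompose_of_mem_ne 𝒞 (SetLike.one_mem_graded 𝒞) (by rintro rfl; exact hI rfl)]
    exact zero_mem _
  | add x y _ _ hx hy =>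
    intro I hI
    rw [decompose_add, DirectSum.add_apply, AddMemClass.coe_add]
    exact add_mem (hx hI) (hy hI)
  | neg x _ hx =>
    intro I hI
    rw [decompose_neg, DFinsupp.neg_apply, NegMemClass.coe_neg]
    exact neg_mem (hx hI)
  | mul x y _ _ hx hy =>
    intro I hI
    classical
    rw [decompose_mul, coe_mul_apply]
    refine sum_mem fun AB hAB => ?_
    have hsum : AB.1 + AB.2 = I := (Finset.mem_filter.mp hAB).2
    rcases Nat.eq_zero_or_pos (AB.1 q) with hA | hA
    · refine Ideal.mul_mem_left _ _ (hy ?_)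
      have := congrFun hsum q
      simp only [Pi.add_apply] at this
      omega
    · exact Ideal.mul_mem_right _ _ (hx hA.ne')

theorem IsStandardGraded.toAddSubmonoid_add_single_le_mul
    (hgen : IsStandardGraded 𝒞)
    (I : σ → ℕ) (q : σ) :
    (𝒞 (I + Pi.single q 1)).toAddSubmonoid ≤
      (𝒞 I).toAddSubmonoid * (𝒞 (Pi.single q 1)).toAddSubmonoid := by
  intro c hc
  have hspan := hgen.coe_decompose_mem_span_single (q := q) c (I := I + Pi.single q 1) (by simp)
  simpa [decompose_of_mem_same 𝒞 hc] using coe_decompose_add_mem_mul_of_mem_span 𝒞 hspan I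

theorem IsStandardGraded.toAddSubmonoid_add_le_mul
    (hgen : IsStandardGraded 𝒞)
    (A B : σ → ℕ) :
    (𝒞 (A + B)).toAddSubmonoid ≤ (𝒞 A).toAddSubmonoid * (𝒞 B).toAddSubmonoid := by
  have hzero (A : σ → ℕ) :
      (𝒞 (A + 0)).toAddSubmonoid ≤ (𝒞 A).toAddSubmonoid * (𝒞 0).toAddSubmonoid :=
    fun c hc => by simpa using AddSubmonoid.mul_mem_mul (add_zero A ▸ hc) (SetLike.one_mem_graded 𝒞)
  refine Pi.single_induction (fun B => ∀ A, (𝒞 (A + B)).toAddSubmonoid ≤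
    (𝒞 A).toAddSubmonoid * (𝒞 B).toAddSubmonoid) B hzero
    (fun _ _ hB hB' => SetLike.toAddSubmonoid_add_le_mul_add 𝒞 hB hB') (fun q k => ?_) A
  induction k with
  | zero => simpa using hzero
  | succ k ih =>
    rw [Pi.single_add]
    exact SetLike.toAddSubmonoid_add_le_mul_add 𝒞 ih (hgen.toAddSubmonoid_add_single_le_mul · q)

theorem smul_eq_zero_of_diag_eq_bot
    (hgen : IsStandardGraded 𝒞)
    (hcompat : IsGradedSMul 𝒞 ℳ)
    {n : ℤ} (hn : ℳ (fun _ => n) = ⊥) {I : σ → ℕ} {K : σ → ℤ}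
    (hK : ∀ q, K q ≤ n) (hIK : ∀ q, n ≤ I q + K q) {c : C} {m : M}
    (hc : c ∈ 𝒞 I) (hm : m ∈ ℳ K) : c • m = 0 := by
  set B : σ → ℕ := fun q => (n - K q).toNat
  have hBI : B ≤ I := fun q => by have := hIK q; simp only [B]; omega
  have hBK : (fun q => (B q : ℤ)) + K = fun _ => n := funext fun q => by
    have := hK q; simp only [B, Pi.add_apply]; omega
  have hc' : c ∈ (𝒞 (I - B)).toAddSubmonoid * (𝒞 B).toAddSubmonoid :=
    hgen.toAddSubmonoid_add_le_mul _ _ (by rwa [tsub_add_cancel_of_le hBI])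
  refine AddSubmonoid.mul_induction_on hc' (fun a _ b hb => ?_) fun x y hx hy => ?_
  · have hbm : b • m ∈ ℳ (fun _ => n) := hBK ▸ hcompat B K b m hb hm
    rw [hn, AddSubgroup.mem_bot] at hbm
    rw [mul_smul, hbm, smul_zero]
  · rw [add_smul, hx, hy, add_zero]

variable [Decomposition ℳ]

theorem mem_vanishingAbove_of_mem
    (hgen : IsStandardGraded 𝒞)
    (hcompat : IsGradedSMul 𝒞 ℳ)
    {n : ℤ} (hn : ℳ (fun _ => n) = ⊥) {K : σ → ℤ} (hK : ∀ q, K q ≤ n) {m : M} (hm : m ∈ ℳ K) :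
    m ∈ vanishingAbove C ℳ n := by
  classical
  intro c J hJ
  rw [← sum_support_decompose 𝒞 c, Finset.sum_smul, decompose_sum, DFinsupp.finsetSum_apply,
    AddSubmonoidClass.coe_finsetSum]
  refine Finset.sum_eq_zero fun I _ => ?_
  have hIm := hcompat I K _ m (SetLike.coe_mem (decompose 𝒞 c I)) hm
  by_cases hIKJ : (fun q => (I q : ℤ)) + K = J
  · have hIK (q : σ) : n ≤ I q + K q := (hJ q).trans_eq (congrFun hIKJ q).symm
    rw [smul_eq_zero_of_diag_eq_bot hgen hcompat hn hK hIK (SetLike.coe_mem _) hm]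
    simp
  · exact decompose_of_mem_ne ℳ hIm hIKJ

theorem iSup_vanishingAbove_eq_top
    (hgen : IsStandardGraded 𝒞)
    (hcompat : IsGradedSMul 𝒞 ℳ)
    (hdiag : ∃ n₀ : ℤ, ∀ n : ℤ, n₀ ≤ n → ℳ (fun _ => n) = ⊥) :
    ⨆ n, vanishingAbove C ℳ n = ⊤ := by
  obtain ⟨n₀, hn₀⟩ := hdiag
  refine Submodule.eq_top_iff'.mpr fun x => ?_
  induction x using Decomposition.inductionOn ℳ with
  | zero => exact zero_mem _
  | @homogeneous K m =>
    obtain ⟨b, hb⟩ := (Set.finite_range K).bddAbove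
    exact Submodule.mem_iSup_of_mem (max n₀ b) <| mem_vanishingAbove_of_mem hgen hcompat
      (hn₀ _ (le_max_left _ _)) (fun q => (hb ⟨q, rfl⟩).trans (le_max_right _ _)) m.2
  | add x y hx hy => exact add_mem hx hy

end StandardGraded

theorem graded_module_diag_vanishing_implies_tail_vanishing_general
    (r : ℕ) (C : Type*) [CommRing C]
    (𝒞 : (Fin r → ℕ) → AddSubgroup C) [GradedRing 𝒞]
    (hgen : Subring.closure
      ((𝒞 0 : Set C) ∪ ⋃ q : Fin r, (𝒞 (Pi.single q 1) : Set C)) = ⊤)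
    (M : Type*) [AddCommGroup M] [Module C M] [Module.Finite C M]
    (ℳ : (Fin r → ℤ) → AddSubgroup M) [DirectSum.Decomposition ℳ]
    (hcompat : ∀ (I : Fin r → ℕ) (J : Fin r → ℤ) (c : C) (m : M),
      c ∈ 𝒞 I → m ∈ ℳ J → c • m ∈ ℳ ((fun q => (I q : ℤ)) + J))
    (hdiag : ∃ n₀ : ℤ, ∀ n : ℤ, n₀ ≤ n → ℳ (fun _ => n) = ⊥) :
    ∃ n₁ : ℤ, ∀ J : Fin r → ℤ, (∀ q, n₁ ≤ J q) → ℳ J = ⊥ := by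
  obtain ⟨n, hn⟩ := Submodule.exists_eq_top_of_directed_of_iSup_eq_top _
    (vanishingAbove_mono C ℳ).directed_le (iSup_vanishingAbove_eq_top hgen hcompat hdiag)
  refine ⟨n, fun J hJ => eq_bot_iff.mpr fun x hx => ?_⟩
  have hxJ := (hn ▸ Submodule.mem_top : x ∈ vanishingAbove C ℳ n) 1 J hJ
  rwa [one_smul, decompose_of_mem_same ℳ hx] at hxJ

/-- Let `C` be a commutative ring graded by `ℕ^r` (here `Fin r → ℕ`),
generated as a ring by the degree-`0` component together with the components in the
standard basis degrees.  Let `M` be a finitely generated `C`-module with a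
`ℤ^r`-grading compatible with the grading of `C`.  If the diagonal components
`M_{nE}` (with `E = (1,…,1)`) vanish for all sufficiently large integers `n`, then
`M_J = 0` for all `J` with all coordinates sufficiently large. -/
theorem graded_module_diag_vanishing_implies_tail_vanishing
    (r : ℕ) (hr : 1 ≤ r) (C : Type*) [CommRing C]
    (𝒞 : (Fin r → ℕ) → AddSubgroup C) [GradedRing 𝒞]
    (hgen : Subring.closure
      ((𝒞 0 : Set C) ∪ ⋃ q : Fin r, (𝒞 (Pi.single q 1) : Set C)) = ⊤)
    (M : Type*) [AddCommGroup M] [Module C M] [Module.Finite C M]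
    (ℳ : (Fin r → ℤ) → AddSubgroup M) [DirectSum.Decomposition ℳ]
    (hcompat : ∀ (I : Fin r → ℕ) (J : Fin r → ℤ) (c : C) (m : M),
      c ∈ 𝒞 I → m ∈ ℳ J → c • m ∈ ℳ ((fun q => (I q : ℤ)) + J))
    (hdiag : ∃ n₀ : ℤ, ∀ n : ℤ, n₀ ≤ n → ℳ (fun _ => n) = ⊥) :
    ∃ n₁ : ℤ, ∀ J : Fin r → ℤ, (∀ q, n₁ ≤ J q) → ℳ J = ⊥ :=
  graded_module_diag_vanishing_implies_tail_vanishing_general r C 𝒞 hgen M ℳ hcompat hdiag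
end

section
/- Let $R$ be a ring and let $P$ be a property of (left) $R$-modules that is invariant under isomorphism and has the two-out-of-three property: for every short exact sequence $0 \to M' \to M \to M'' \to 0$ of $R$-modules, if two of $M'$, $M$, $M''$ satisfy $P$, then so does the third. Let $q \geq 0$ and let $0 \to M_0 \to M_1 \to \cdots \to M_q \to 0$ be a complex of $R$-modules (composites of consecutive maps are zero) all of whose homology modules $\ker(M_i \to M_{i+1})/\operatorname{im}(M_{i-1} \to M_i)$ (for $0 \leq i \leq q$, with the convention that the maps into $M_0$ and out of $M_q$ are zero) satisfy $P$. If there is an index $j$ such that $M_i$ satisfies $P$ for all $i \neq j$, then $M_j$ also satisfies $P$. -/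
/-!
Write `Z i = ker (d i)` and `B i = range (d i)`. The short exact sequences
`0 → Z i → M i → B i → 0` and `0 → B i → Z (i+1) → H (i+1) → 0`, together with the hypothesis
on homology, let the property travel along the chain `Z 0, B 0, Z 1, B 1, …` upwards from
`Z 0 = H 0` through every `M i` with `i < j`, and downwards from `Z q ≅ M q` through every
`M i` with `i > j`. This yields `P (Z j)` and `P (B j)`, hence `P (M j)`.
-/

universe u v

open LinearMap

variable {R : Type u} [Ring R]

def IsoInvariant (P : ∀ (N : Type v) [AddCommGroup N] [Module R N], Prop) : Prop :=
  ∀ (N₁ N₂ : Type v) [AddCommGroup N₁] [Module R N₁] [AddCommGroup N₂] [Module R N₂],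
    (N₁ ≃ₗ[R] N₂) → P N₁ → P N₂

def TwoOutOfThree (P : ∀ (N : Type v) [AddCommGroup N] [Module R N], Prop) : Prop :=
  ∀ (N' N N'' : Type v) [AddCommGroup N'] [Module R N'] [AddCommGroup N] [Module R N]
    [AddCommGroup N''] [Module R N''] (f : N' →ₗ[R] N) (g : N →ₗ[R] N''),
    Function.Injective f → Function.Surjective g → range f = ker g →
    ((P N' → P N → P N'') ∧ (P N' → P N'' → P N) ∧ (P N → P N'' → P N'))

abbrev homologyAt {A B C : Type v} [AddCommGroup A] [Module R A] [AddCommGroup B] [Module R B]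
    [AddCommGroup C] [Module R C] (f : A →ₗ[R] B) (g : B →ₗ[R] C) : Type v :=
  ker g ⧸ (range f).comap (ker g).subtype

variable {P : ∀ (N : Type v) [AddCommGroup N] [Module R N], Prop}
  {N N' : Type v} [AddCommGroup N] [Module R N] [AddCommGroup N'] [Module R N']

theorem IsoInvariant.iff (hiso : IsoInvariant P) (e : N ≃ₗ[R] N') : P N ↔ P N' :=
  ⟨hiso _ _ e, hiso _ _ e.symm⟩

theorem IsoInvariant.ker_iff_of_subsingleton (hiso : IsoInvariant P) [Subsingleton N']
    (f : N →ₗ[R] N') : P (ker f) ↔ P N :=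
  hiso.iff (LinearEquiv.ofTop _ (ker_eq_top.2 (Subsingleton.elim f 0)))

namespace TwoOutOfThree

variable (h23 : TwoOutOfThree P)
include h23

theorem submodule_iff_of_quotient (S : Submodule R N) (hQ : P (N ⧸ S)) : P S ↔ P N :=
  have hS := h23 _ _ _ S.subtype S.mkQ S.injective_subtype S.mkQ_surjective
    (by rw [Submodule.range_subtype, Submodule.ker_mkQ])
  ⟨fun h ↦ hS.2.1 h hQ, fun h ↦ hS.2.2 h hQ⟩

theorem ker_range_exact (f : N →ₗ[R] N') :
    (P (ker f) → P N → P (range f)) ∧ (P (ker f) → P (range f) → P N) ∧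
      (P N → P (range f) → P (ker f)) :=
  h23 _ _ _ (ker f).subtype f.rangeRestrict (ker f).injective_subtype f.surjective_rangeRestrict
    (by rw [Submodule.range_subtype, ker_rangeRestrict])

theorem ker_iff_range_of_homologyAt (hiso : IsoInvariant P) {A : Type v} [AddCommGroup A]
    [Module R A] {f : A →ₗ[R] N} {g : N →ₗ[R] N'} (hfg : g ∘ₗ f = 0)
    (hH : P (homologyAt f g)) : P (ker g) ↔ P (range f) :=
  (h23.submodule_iff_of_quotient _ hH).symm.trans
    (hiso.iff (Submodule.comapSubtypeEquivOfLe (range_le_ker_iff.2 hfg)))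

section Complex

variable (hiso : IsoInvariant P) {M : ℕ → Type v} [∀ i, AddCommGroup (M i)]
  [∀ i, Module R (M i)] {d : ∀ i, M i →ₗ[R] M (i + 1)} (hcx : ∀ i, d (i + 1) ∘ₗ d i = 0)
include hiso hcx

theorem ker_of_forall_lt (hZ₀ : P (ker (d 0))) :
    ∀ j, (∀ i < j, P (M i) ∧ P (homologyAt (d i) (d (i + 1)))) → P (ker (d j))
  | 0, _ => hZ₀
  | j + 1, hMH =>
    have hZ := ker_of_forall_lt hZ₀ j fun i hi ↦ hMH i (by omega)
    (h23.ker_iff_range_of_homologyAt hiso (hcx j) (hMH j j.lt_succ_self).2).2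
      ((h23.ker_range_exact (d j)).1 hZ (hMH j j.lt_succ_self).1)

theorem ker_of_forall_ge {q : ℕ} (hZq : P (ker (d q))) {j : ℕ} (hjq : j ≤ q)
    (hMH : ∀ i, j ≤ i → i < q → P (M i) ∧ P (homologyAt (d i) (d (i + 1)))) :
    P (ker (d j)) := by
  induction hjq using Nat.decreasingInduction with
  | self => exact hZq
  | of_succ i hiq ih =>
    obtain ⟨hM, hH⟩ := hMH i le_rfl hiq
    have hB := (h23.ker_iff_range_of_homologyAt hiso (hcx i) hH).1
      (ih fun k hik hkq ↦ hMH k (by omega) hkq)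
    exact (h23.ker_range_exact (d i)).2.2 hM hB

end Complex

end TwoOutOfThree

/-- Let `P` be an isomorphism-invariant property of `R`-modules with the
two-out-of-three property for short exact sequences.  Given a complex
`0 → M 0 → M 1 → ⋯ → M q → 0` (modelled by `M : ℕ → Type v` with `M i` trivial for
`i > q` and differentials `d i : M i →ₗ[R] M (i+1)`) all of whose homology modules
satisfy `P`, if `P` holds for all `M i` with `i ≤ q`, `i ≠ j` (for some `j ≤ q`),
then `P` holds for `M j` as well. -/
theorem two_out_of_three_for_complexes
    {R : Type u} [Ring R]
    (P : ∀ (N : Type v) [AddCommGroup N] [Module R N], Prop)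
    (hiso : ∀ (N₁ N₂ : Type v) [AddCommGroup N₁] [Module R N₁]
      [AddCommGroup N₂] [Module R N₂], (N₁ ≃ₗ[R] N₂) → P N₁ → P N₂)
    (h23 : ∀ (N' N N'' : Type v) [AddCommGroup N'] [Module R N']
      [AddCommGroup N] [Module R N] [AddCommGroup N''] [Module R N'']
      (f : N' →ₗ[R] N) (g : N →ₗ[R] N''),
      Function.Injective f → Function.Surjective g →
      LinearMap.range f = LinearMap.ker g →
      ((P N' → P N → P N'') ∧ (P N' → P N'' → P N) ∧ (P N → P N'' → P N')))
    (q : ℕ) (M : ℕ → Type v) [∀ i, AddCommGroup (M i)] [∀ i, Module R (M i)]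
    (d : ∀ i, M i →ₗ[R] M (i + 1))
    (hcx : ∀ i, (d (i + 1)).comp (d i) = 0)
    (htriv : ∀ i, q < i → Subsingleton (M i))
    (hH0 : P ↥(LinearMap.ker (d 0)))
    (hH : ∀ i, i + 1 ≤ q → P (↥(LinearMap.ker (d (i + 1))) ⧸
      (Submodule.comap (LinearMap.ker (d (i + 1))).subtype (LinearMap.range (d i)))))
    (j : ℕ) (hj : j ≤ q)
    (hP : ∀ i ≤ q, i ≠ j → P (M i)) :
    P (M j) := by
  have hiso : IsoInvariant P := hiso
  have h23 : TwoOutOfThree P := h23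
  have hZq_iff : P (ker (d q)) ↔ P (M q) :=
    haveI := htriv (q + 1) q.lt_succ_self
    hiso.ker_iff_of_subsingleton (d q)
  have hZj : P (ker (d j)) :=
    h23.ker_of_forall_lt hiso hcx hH0 j fun i hi ↦ ⟨hP i (by omega) (by omega), hH i (by omega)⟩
  rcases hj.lt_or_eq with hjq | rfl
  · have hZj₁ : P (ker (d (j + 1))) :=
      h23.ker_of_forall_ge hiso hcx (hZq_iff.2 (hP q le_rfl hjq.ne')) hjq fun i hji hiq ↦
        ⟨hP i hiq.le (by omega), hH i hiq⟩
    have hBj := (h23.ker_iff_range_of_homologyAt hiso (hcx j) (hH j hjq)).1 hZj₁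
    exact (h23.ker_range_exact (d j)).2.1 hZj hBj
  · exact hZq_iff.1 hZj
end

section
/- Let $k$ be a field of characteristic $p > 0$, let $A$ be a finitely generated commutative $k$-algebra, and let $d : A \to A$ be a $k$-linear derivation with $d \circ d = 0$. Then $\ker d$ is a $k$-subalgebra of $A$, the image $\operatorname{im} d$ is contained in $\ker d$ and is an ideal of the ring $\ker d$, and the quotient $k$-algebra $\ker d / \operatorname{im} d$ is a finitely generated $k$-algebra. -/
/-!
Every `p`-th power is a cycle: `d (x ^ p) = p • x ^ (p - 1) • d x = 0`. Hence `A` is integral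
over the subalgebra `ker d`, and being of finite type over `k`, it is module-finite over `ker d`.
The Artin–Tate lemma then makes `ker d` a finitely generated `k`-algebra, and so is its quotient
by the boundaries.
-/

namespace Derivation

variable {R A M : Type*} [CommSemiring R] [CommSemiring A] [Algebra R A]
  [AddCommMonoid M] [Module A M] [Module R M]

theorem map_pow_char_eq_zero (p : ℕ) [CharP R p] (D : Derivation R A M) (a : A) :
    D (a ^ p) = 0 := by
  rw [leibniz_pow, ← Nat.cast_smul_eq_nsmul R, CharP.cast_eq_zero, zero_smul]

def kerSubalgebra (D : Derivation R A M) : Subalgebra R A where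
  carrier := {a | D a = 0}
  mul_mem' {a b} (ha : D a = 0) (hb : D b = 0) :=
    show D (a * b) = 0 by rw [leibniz, ha, hb, smul_zero, smul_zero, add_zero]
  add_mem' {a b} (ha : D a = 0) (hb : D b = 0) :=
    show D (a + b) = 0 by rw [map_add, ha, hb, add_zero]
  algebraMap_mem' r := D.map_algebraMap r

@[simp]
theorem mem_kerSubalgebra {D : Derivation R A M} {a : A} : a ∈ D.kerSubalgebra ↔ D a = 0 :=
  Iff.rfl

/-- The boundaries `D A ∩ ker D`, an ideal of the cycles. -/
def rangeIdeal (D : Derivation R A A) : Ideal D.kerSubalgebra where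
  carrier := {x | ∃ y, D y = x}
  zero_mem' := ⟨0, D.map_zero⟩
  add_mem' := by
    rintro _ _ ⟨y, hy⟩ ⟨z, hz⟩
    exact ⟨y + z, by rw [map_add, hy, hz]; rfl⟩
  smul_mem' := by
    rintro c _ ⟨y, hy⟩
    refine ⟨c * y, ?_⟩
    rw [leibniz, mem_kerSubalgebra.mp c.2, smul_zero, add_zero, smul_eq_mul, hy]
    rfl

end Derivation

theorem Subalgebra.isIntegral_of_pow_mem {R A : Type*} [CommRing R] [CommRing A] [Algebra R A]
    (S : Subalgebra R A) {n : ℕ} (hn : n ≠ 0) (h : ∀ a : A, a ^ n ∈ S) :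
    Algebra.IsIntegral S A :=
  ⟨fun a => IsIntegral.of_pow (Nat.pos_of_ne_zero hn)
    (isIntegral_algebraMap (x := (⟨a ^ n, h a⟩ : S)))⟩

theorem Subalgebra.finiteType_of_isIntegral {R A : Type*} [CommRing R] [IsNoetherianRing R]
    [CommRing A] [Algebra R A] [Algebra.FiniteType R A] (S : Subalgebra R A)
    [Algebra.IsIntegral S A] : Algebra.FiniteType R S :=
  have : Algebra.FiniteType S A := .of_restrictScalars_finiteType R S A
  have : Module.Finite S A := Algebra.IsIntegral.finite
  ⟨fg_of_fg_of_fg R S A Algebra.FiniteType.out Module.Finite.fg_top Subtype.val_injective⟩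

theorem homology_of_derivation_finiteType_general
    (k : Type*) [Field k] (p : ℕ) (hp : p ≠ 0) [CharP k p]
    (A : Type*) [CommRing A] [Algebra k A] [Algebra.FiniteType k A]
    (d : Derivation k A A) :
    ∃ (S : Subalgebra k A) (I : Ideal S),
      (S : Set A) = {x : A | d x = 0} ∧
      (I : Set S) = {x : S | ∃ y : A, d y = (x : A)} ∧
      Algebra.FiniteType k (S ⧸ I) := by
  refine ⟨d.kerSubalgebra, d.rangeIdeal, rfl, rfl, ?_⟩
  have : Algebra.IsIntegral d.kerSubalgebra A :=
    d.kerSubalgebra.isIntegral_of_pow_mem hp fun a => d.map_pow_char_eq_zero p a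
  have : Algebra.FiniteType k d.kerSubalgebra := d.kerSubalgebra.finiteType_of_isIntegral
  exact .of_surjective (Ideal.Quotient.mkₐ k _) (Ideal.Quotient.mkₐ_surjective k _)

/-- Let `k` be a field of characteristic `p > 0`, `A` a finitely
generated commutative `k`-algebra and `d : A → A` a `k`-linear derivation with
`d ∘ d = 0`.  Then the kernel of `d` is a `k`-subalgebra `S` of `A`, the image of
`d` is (contained in `S` and is) an ideal `I` of `S`, and the quotient `S ⧸ I` is a
finitely generated `k`-algebra. -/
theorem homology_of_derivation_finiteType
    (k : Type*) [Field k] (p : ℕ) (hp : p ≠ 0) [CharP k p]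
    (A : Type*) [CommRing A] [Algebra k A] [Algebra.FiniteType k A]
    (d : Derivation k A A) (hd2 : ∀ x : A, d (d x) = 0) :
    ∃ (S : Subalgebra k A) (I : Ideal S),
      (S : Set A) = {x : A | d x = 0} ∧
      (I : Set S) = {x : S | ∃ y : A, d y = (x : A)} ∧
      Algebra.FiniteType k (S ⧸ I) :=
  homology_of_derivation_finiteType_general k p hp A d
end
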